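/- For a positively weighted undirected graph with k connected components, the largest eigenvalue λ̃_m of the renormalized Laplacian satisfies λ̃_m ≤ max_k { (d_m^{(k)}/(d_m^{(k)}+1)) λ_m^{(k)} }, where d_m^{(k)} and λ_m^{(k)} are the maximum degree and largest normalized-Laplacian eigenvalue of the k-th component; moreover, this bound is at most (d_m/(d_m+1))λ_m, where d_m and λ_m are the global maximum degree and largest eigenvalue. -/

import Mathlib

/-!
Since `(D + I) - (A + I) = D - A`, the renormalized Laplacian of a component is
`(D + I)^{-1/2} (D - A) (D + I)^{-1/2}`. For an eigenvector `w` of it, put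
`y = D^{1/2} (D + I)^{-1/2} w`: then `λ̃ ‖w‖² = yᵀ L_s y ≤ λ_m ‖y‖²`, and
`‖y‖² = Σ d/(d+1) w² ≤ d_m/(d_m+1) ‖w‖²`, using `λ_m ≥ 0` (`D^{1/2} 1` lies in the
kernel of `L_s`). An eigenvector of the block diagonal matrix is nonzero on some block, so
it yields an eigenvector of that component. The comparison with the global quantities is
the monotonicity of `x ↦ x/(x+1)`.
-/

open Matrix BigOperators

noncomputable def invSqrtDiag {ι : Type*} [Fintype ι] [DecidableEq ι] (d : ι → ℝ) :
    Matrix ι ι ℝ :=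
  Matrix.diagonal fun i => (Real.sqrt (d i))⁻¹

def IsEigenvalue {ι : Type*} [Fintype ι] (M : Matrix ι ι ℝ) (μ : ℝ) : Prop :=
  ∃ v : ι → ℝ, v ≠ 0 ∧ M.mulVec v = μ • v

section Spectral

variable {n : Type*} [Fintype n]

lemma IsEigenvalue.of_smul_one_sub [DecidableEq n] {M : Matrix n n ℝ} {c μ : ℝ}
    (h : IsEigenvalue (c • 1 - M) μ) : IsEigenvalue M (c - μ) := by
  obtain ⟨v, hv0, hv⟩ := h
  refine ⟨v, hv0, ?_⟩
  rw [sub_mulVec, smul_mulVec, one_mulVec] at hv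
  rw [sub_smul, ← hv, sub_sub_cancel]

lemma Matrix.IsHermitian.isEigenvalue_eigenvalues [DecidableEq n] {M : Matrix n n ℝ}
    (hM : M.IsHermitian) (i : n) : IsEigenvalue M (hM.eigenvalues i) :=
  ⟨_, fun h => hM.eigenvectorBasis.orthonormal.ne_zero i (by ext a; exact congrFun h a),
    hM.mulVec_eigenvectorBasis i⟩

lemma Matrix.IsHermitian.dotProduct_mulVec_le_of_isEigenvalue_le {M : Matrix n n ℝ}
    (hM : M.IsHermitian) {lam : ℝ} (hlam : ∀ μ, IsEigenvalue M μ → μ ≤ lam) (x : n → ℝ) :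
    x ⬝ᵥ M *ᵥ x ≤ lam * (x ⬝ᵥ x) := by
  classical
  have hN : (lam • 1 - M).IsHermitian := (isHermitian_one.smul (.all lam)).sub hM
  have hpsd : (lam • 1 - M).PosSemidef :=
    hN.posSemidef_iff_eigenvalues_nonneg.mpr fun i => show 0 ≤ _ by
      have := hlam _ (hN.isEigenvalue_eigenvalues i).of_smul_one_sub
      linarith
  have := hpsd.dotProduct_mulVec_nonneg x
  rw [star_trivial, sub_mulVec, smul_mulVec, one_mulVec, dotProduct_sub, dotProduct_smul,
    smul_eq_mul] at this
  linarith

end Spectral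

section Rescaling

variable {n : Type*} [Fintype n] [DecidableEq n]

lemma invSqrtDiag_mulVec_apply (s x : n → ℝ) (a : n) :
    (invSqrtDiag s *ᵥ x) a = (Real.sqrt (s a))⁻¹ * x a := by
  simp [invSqrtDiag, mulVec_diagonal]

lemma dotProduct_invSqrtDiag_mul_mul_invSqrtDiag_mulVec (s : n → ℝ) (L : Matrix n n ℝ)
    (x : n → ℝ) :
    x ⬝ᵥ (invSqrtDiag s * L * invSqrtDiag s) *ᵥ x =
      (invSqrtDiag s *ᵥ x) ⬝ᵥ L *ᵥ (invSqrtDiag s *ᵥ x) := by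
  rw [← mulVec_mulVec, ← mulVec_mulVec, dotProduct_mulVec]
  congr 1
  ext a
  simp [invSqrtDiag, vecMul_diagonal, mulVec_diagonal, mul_comm]

lemma isHermitian_invSqrtDiag_mul_mul_invSqrtDiag (s : n → ℝ) {L : Matrix n n ℝ}
    (hL : L.IsSymm) : (invSqrtDiag s * L * invSqrtDiag s).IsHermitian := by
  simpa [invSqrtDiag] using
    isHermitian_conjTranspose_mul_mul (invSqrtDiag s) (A := L) (by simpa using hL)

lemma isEigenvalue_zero_invSqrtDiag_mul_mul_invSqrtDiag [Nonempty n] (A : Matrix n n ℝ)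
    (d : n → ℝ) (hd : ∀ a, d a = ∑ b, A a b) (hdpos : ∀ a, 0 < d a) :
    IsEigenvalue (invSqrtDiag d * (diagonal d - A) * invSqrtDiag d) 0 := by
  have hsqrt : ∀ a, Real.sqrt (d a) ≠ 0 := fun a => (Real.sqrt_pos.mpr (hdpos a)).ne'
  refine ⟨fun a => Real.sqrt (d a), fun h => hsqrt (Classical.arbitrary n)
    (congrFun h _), ?_⟩
  have hone : invSqrtDiag d *ᵥ (fun a => Real.sqrt (d a)) = 1 := by
    ext a
    rw [invSqrtDiag_mulVec_apply, inv_mul_cancel₀ (hsqrt a), Pi.one_apply]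
  have hker : (diagonal d - A) *ᵥ 1 = 0 := by
    ext a
    rw [sub_mulVec, Pi.sub_apply, mulVec_diagonal, hd a]
    simp [mulVec, dotProduct]
  rw [← mulVec_mulVec, ← mulVec_mulVec, hone, hker, mulVec_zero, zero_smul]

/-- Both Rayleigh quotients share the numerator `uᵀ L u`; only the denominators change. -/
lemma le_mul_of_isEigenvalue_invSqrtDiag_mul_mul_invSqrtDiag {L : Matrix n n ℝ} (hL : L.IsSymm)
    {s t : n → ℝ} (hs : ∀ a, 0 < s a) (ht : ∀ a, 0 ≤ t a) {c lam : ℝ}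
    (hst : ∀ a, s a / t a ≤ c) (hlam0 : 0 ≤ lam)
    (hlam : ∀ μ, IsEigenvalue (invSqrtDiag s * L * invSqrtDiag s) μ → μ ≤ lam) {μ : ℝ}
    (hμ : IsEigenvalue (invSqrtDiag t * L * invSqrtDiag t) μ) : μ ≤ c * lam := by
  obtain ⟨w, hw0, hw⟩ := hμ
  set y : n → ℝ := fun a => Real.sqrt (s a) / Real.sqrt (t a) * w a
  have hy : invSqrtDiag s *ᵥ y = invSqrtDiag t *ᵥ w := by
    ext a
    have : Real.sqrt (s a) ≠ 0 := (Real.sqrt_pos.mpr (hs a)).ne'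
    simp only [y, invSqrtDiag_mulVec_apply]
    field_simp
  have hyy : y ⬝ᵥ y ≤ c * (w ⬝ᵥ w) := by
    simp only [y, dotProduct, Finset.mul_sum]
    refine Finset.sum_le_sum fun a _ => ?_
    have : (Real.sqrt (s a) / Real.sqrt (t a)) ^ 2 = s a / t a := by
      rw [div_pow, Real.sq_sqrt (hs a).le, Real.sq_sqrt (ht a)]
    nlinarith [hst a, mul_self_nonneg (w a)]
  have hww : 0 < w ⬝ᵥ w := dotProduct_self_star_pos_iff.mpr hw0
  have : μ * (w ⬝ᵥ w) ≤ c * lam * (w ⬝ᵥ w) :=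
    calc μ * (w ⬝ᵥ w) = w ⬝ᵥ (invSqrtDiag t * L * invSqrtDiag t) *ᵥ w := by
          rw [hw, dotProduct_smul, smul_eq_mul]
      _ = y ⬝ᵥ (invSqrtDiag s * L * invSqrtDiag s) *ᵥ y := by
          rw [dotProduct_invSqrtDiag_mul_mul_invSqrtDiag_mulVec,
            dotProduct_invSqrtDiag_mul_mul_invSqrtDiag_mulVec, hy]
      _ ≤ lam * (y ⬝ᵥ y) :=
          (isHermitian_invSqrtDiag_mul_mul_invSqrtDiag s hL)
            |>.dotProduct_mulVec_le_of_isEigenvalue_le hlam y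
      _ ≤ c * lam * (w ⬝ᵥ w) := by nlinarith
  exact le_of_mul_le_mul_right this hww

end Rescaling

lemma div_add_one_le_div_add_one {x y : ℝ} (hx : 0 ≤ x) (hxy : x ≤ y) :
    x / (x + 1) ≤ y / (y + 1) := by
  rw [div_le_div_iff₀ (by linarith) (by linarith)]
  linarith

lemma Matrix.diagonal_add_one_sub_add_one {n : Type*} [DecidableEq n] (d : n → ℝ)
    (A : Matrix n n ℝ) : diagonal (fun a => d a + 1) - (A + 1) = diagonal d - A := by
  ext a b
  by_cases h : a = b <;> simp [h]

lemma Matrix.blockDiagonal'_mulVec_apply {o : Type*} [Fintype o] [DecidableEq o]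
    {m : o → Type*} [∀ i, Fintype (m i)] (M : ∀ i, Matrix (m i) (m i) ℝ)
    (v : (Σ i, m i) → ℝ) (i : o) (a : m i) :
    (blockDiagonal' M *ᵥ v) ⟨i, a⟩ = (M i *ᵥ fun b => v ⟨i, b⟩) a := by
  rw [mulVec, dotProduct, ← Finset.univ_sigma_univ, Finset.sum_sigma, mulVec, dotProduct,
    Finset.sum_eq_single i]
  · exact Finset.sum_congr rfl fun b _ => by simp
  · intro j _ hj
    exact Finset.sum_eq_zero fun b _ => by
      rw [blockDiagonal'_apply, dif_neg (fun h => hj h.symm), zero_mul]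
  · exact fun h => absurd (Finset.mem_univ i) h

lemma IsEigenvalue.exists_of_blockDiagonal' {o : Type*} [Fintype o] [DecidableEq o]
    {m : o → Type*} [∀ i, Fintype (m i)] {M : ∀ i, Matrix (m i) (m i) ℝ} {μ : ℝ}
    (h : IsEigenvalue (blockDiagonal' M) μ) : ∃ i, IsEigenvalue (M i) μ := by
  obtain ⟨v, hv0, hv⟩ := h
  obtain ⟨⟨i, a⟩, ha⟩ := Function.ne_iff.mp hv0
  refine ⟨i, fun b => v ⟨i, b⟩, Function.ne_iff.mpr ⟨a, ha⟩, funext fun b => ?_⟩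
  rw [← blockDiagonal'_mulVec_apply, hv]
  rfl

theorem renormalized_laplacian_componentwise_bound_general
    {k : ℕ} (hk : 0 < k) (m : Fin k → ℕ)
    (A : ∀ i : Fin k, Matrix (Fin (m i)) (Fin (m i)) ℝ)
    (hAsymm : ∀ i, (A i).IsSymm)
    (d : ∀ i : Fin k, Fin (m i) → ℝ)
    (hd : ∀ i a, d i a = ∑ b, A i a b) (hdpos : ∀ i a, 0 < d i a)
    (dmk : Fin k → ℝ) (hdmk : ∀ i, IsGreatest (Set.range (d i)) (dmk i))
    (lamk : Fin k → ℝ)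
    (hlamk : ∀ i, IsGreatest
      {μ | IsEigenvalue (invSqrtDiag (d i) * (Matrix.diagonal (d i) - A i) *
        invSqrtDiag (d i)) μ} (lamk i))
    (dm : ℝ) (hdm : dm = Finset.univ.sup' (Finset.univ_nonempty_iff.mpr ⟨⟨0, hk⟩⟩) dmk)
    (lamm : ℝ) (hlamm : lamm = Finset.univ.sup' (Finset.univ_nonempty_iff.mpr ⟨⟨0, hk⟩⟩) lamk)
    (lamt : ℝ)
    (hlamt : IsGreatest
      {μ | IsEigenvalue
        (Matrix.blockDiagonal' fun i =>
          invSqrtDiag (fun a => d i a + 1) *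
            (Matrix.diagonal (fun a => d i a + 1) - (A i + 1)) *
            invSqrtDiag (fun a => d i a + 1)) μ} lamt) :
    lamt ≤ Finset.univ.sup' (Finset.univ_nonempty_iff.mpr ⟨⟨0, hk⟩⟩)
        (fun i => dmk i / (dmk i + 1) * lamk i) ∧
    Finset.univ.sup' (Finset.univ_nonempty_iff.mpr ⟨⟨0, hk⟩⟩)
        (fun i => dmk i / (dmk i + 1) * lamk i) ≤ dm / (dm + 1) * lamm := by
  have hdmk0 : ∀ i, 0 ≤ dmk i := fun i => by
    obtain ⟨a, ha⟩ := (hdmk i).1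
    exact ha ▸ (hdpos i a).le
  have hlamk0 : ∀ i, 0 ≤ lamk i := fun i => by
    obtain ⟨a, -⟩ := (hdmk i).1
    have : Nonempty (Fin (m i)) := ⟨a⟩
    exact (hlamk i).2 (isEigenvalue_zero_invSqrtDiag_mul_mul_invSqrtDiag _ _ (hd i) (hdpos i))
  have hblock : ∀ i μ, IsEigenvalue (invSqrtDiag (fun a => d i a + 1) *
      (Matrix.diagonal (fun a => d i a + 1) - (A i + 1)) * invSqrtDiag (fun a => d i a + 1)) μ →
      μ ≤ dmk i / (dmk i + 1) * lamk i := fun i μ hμ => by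
    rw [diagonal_add_one_sub_add_one] at hμ
    exact le_mul_of_isEigenvalue_invSqrtDiag_mul_mul_invSqrtDiag
      ((isSymm_diagonal _).sub (hAsymm i)) (hdpos i) (fun a => by linarith [hdpos i a])
      (fun a => div_add_one_le_div_add_one (hdpos i a).le ((hdmk i).2 ⟨a, rfl⟩))
      (hlamk0 i) (fun μ hμ => (hlamk i).2 hμ) hμ
  constructor
  · obtain ⟨i, hi⟩ := hlamt.1.exists_of_blockDiagonal'
    exact (hblock i _ hi).trans (Finset.le_sup' (fun j => dmk j / (dmk j + 1) * lamk j)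
      (Finset.mem_univ i))
  · subst hdm hlamm
    refine Finset.sup'_le _ _ fun i _ => ?_
    have hdi := Finset.le_sup' dmk (Finset.mem_univ i)
    have hD := (hdmk0 i).trans hdi
    exact mul_le_mul (div_add_one_le_div_add_one (hdmk0 i) hdi)
      (Finset.le_sup' lamk (Finset.mem_univ i)) (hlamk0 i) (by positivity)

/-- For a positively weighted undirected graph with `k` connected components (block-diagonal
adjacency matrix), the largest eigenvalue of the renormalized Laplacian is bounded by the
componentwise maximum of `(d_m^{(k)}/(d_m^{(k)}+1)) λ_m^{(k)}`, which is in turn at most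
`(d_m/(d_m+1)) λ_m` for the global maximum degree `d_m` and largest eigenvalue `λ_m`. -/
theorem renormalized_laplacian_componentwise_bound
    {k : ℕ} (hk : 0 < k) (m : Fin k → ℕ) (hm : ∀ i, 0 < m i)
    (A : ∀ i : Fin k, Matrix (Fin (m i)) (Fin (m i)) ℝ)
    (hAsymm : ∀ i, (A i).IsSymm) (hAnonneg : ∀ i a b, 0 ≤ A i a b)
    (d : ∀ i : Fin k, Fin (m i) → ℝ)
    (hd : ∀ i a, d i a = ∑ b, A i a b) (hdpos : ∀ i a, 0 < d i a)
    (dmk : Fin k → ℝ) (hdmk : ∀ i, IsGreatest (Set.range (d i)) (dmk i))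
    (lamk : Fin k → ℝ)
    (hlamk : ∀ i, IsGreatest
      {μ | IsEigenvalue (invSqrtDiag (d i) * (Matrix.diagonal (d i) - A i) *
        invSqrtDiag (d i)) μ} (lamk i))
    (dm : ℝ) (hdm : dm = Finset.univ.sup' (Finset.univ_nonempty_iff.mpr ⟨⟨0, hk⟩⟩) dmk)
    (lamm : ℝ) (hlamm : lamm = Finset.univ.sup' (Finset.univ_nonempty_iff.mpr ⟨⟨0, hk⟩⟩) lamk)
    (lamt : ℝ)
    (hlamt : IsGreatest
      {μ | IsEigenvalue
        (Matrix.blockDiagonal' fun i =>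
          invSqrtDiag (fun a => d i a + 1) *
            (Matrix.diagonal (fun a => d i a + 1) - (A i + 1)) *
            invSqrtDiag (fun a => d i a + 1)) μ} lamt) :
    lamt ≤ Finset.univ.sup' (Finset.univ_nonempty_iff.mpr ⟨⟨0, hk⟩⟩)
        (fun i => dmk i / (dmk i + 1) * lamk i) ∧
    Finset.univ.sup' (Finset.univ_nonempty_iff.mpr ⟨⟨0, hk⟩⟩)
        (fun i => dmk i / (dmk i + 1) * lamk i) ≤ dm / (dm + 1) * lamm :=
  renormalized_laplacian_componentwise_bound_general hk m A hAsymm d hd hdpos dmk hdmk lamk hlamk dm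
    hdm lamm hlamm lamt hlamt
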